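/- arXiv:1412.6653 — 7 statements merged into one kernel-verified Lean document; each statement's English description precedes it below -/
import Mathlib

section
/- For every w in the open upper half-plane ℍ, the imaginary part of the Cauchy transform of μ satisfies −π < Im C(w) < 0. -/
/-! Since `Im (w - x)⁻¹ = -π p(x)` with `p` the Cauchy density of location `Re w` and scale
`Im w`, we have `Im C(w) = -π ∫ p dμ`. As `p > 0` and `μ ≠ 0`, this integral is positive; as
`μ ≤ λ` and `μ ≠ λ` (finite against infinite mass), it is strictly less than `∫ p dλ = 1`. -/

open MeasureTheory Complex Filter Set

noncomputable section

/-- The support of a measure on `ℝ`: points all of whose neighbourhoods have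
positive measure. -/
def msupport (μ : Measure ℝ) : Set ℝ := {x | ∀ U ∈ nhds x, μ U ≠ 0}

/-- The Cauchy transform `C(w) = ∫ (w - x)⁻¹ dμ(x)`. -/
def cauchy (μ : Measure ℝ) (w : ℂ) : ℂ := ∫ x, (w - (x : ℂ))⁻¹ ∂μ

open ProbabilityTheory

section StrictIntegralMono

variable {α : Type*} [MeasurableSpace α] {f : α → ℝ}

lemma integral_pos_of_forall_pos {μ : Measure α} [NeZero μ] (hf : ∀ x, 0 < f x)
    (hfi : Integrable f μ) : 0 < ∫ x, f x ∂μ := by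
  rw [integral_pos_iff_support_of_nonneg (fun x ↦ (hf x).le) hfi,
    Function.support_eq_univ fun x ↦ (hf x).ne', pos_iff_ne_zero, Ne,
    Measure.measure_univ_eq_zero]
  exact NeZero.ne μ

lemma integral_lt_integral_of_measure_lt {μ ν : Measure α} [IsFiniteMeasure μ] (hμν : μ < ν)
    (hf : ∀ x, 0 < f x) (hfi : Integrable f ν) : ∫ x, f x ∂μ < ∫ x, f x ∂ν := by
  have hν : ν - μ + μ = ν := Measure.sub_add_cancel_of_le hμν.le
  have : NeZero (ν - μ) := ⟨fun h ↦ hμν.ne (by rw [← hν, h, zero_add])⟩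
  have hpos := integral_pos_of_forall_pos hf (hfi.mono_measure (Measure.sub_le (ν := μ)))
  conv_rhs => rw [← hν]
  rw [integral_add_measure (hfi.mono_measure Measure.sub_le) (hfi.mono_measure hμν.le)]
  linarith

end StrictIntegralMono

section CauchyTransform

variable {w : ℂ}

lemma norm_inv_sub_ofReal_le (hw : w.im ≠ 0) (x : ℝ) : ‖(w - x)⁻¹‖ ≤ |w.im|⁻¹ := by
  have : |w.im| ≤ ‖w - x‖ := by simpa using Complex.abs_im_le_norm (w - x)
  rw [norm_inv]
  exact inv_anti₀ (abs_pos.2 hw) this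

lemma integrable_inv_sub_ofReal (μ : Measure ℝ) [IsFiniteMeasure μ] (hw : w.im ≠ 0) :
    Integrable (fun x : ℝ ↦ (w - x)⁻¹) μ := by
  have hne (x : ℝ) : w - x ≠ 0 := fun h ↦ hw (by simpa using congrArg Complex.im h)
  exact .of_bound ((continuous_const.sub Complex.continuous_ofReal).inv₀ hne).aestronglyMeasurable
    _ (ae_of_all _ (norm_inv_sub_ofReal_le hw))

lemma im_inv_sub_ofReal (hw : 0 < w.im) (x : ℝ) :
    ((w - x)⁻¹).im = -Real.pi * cauchyPDFReal w.re w.im.toNNReal x := by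
  rw [Complex.inv_im, cauchyPDFReal_def, Real.coe_toNNReal _ hw.le, Complex.normSq_apply]
  simp only [Complex.sub_re, Complex.sub_im, Complex.ofReal_re, Complex.ofReal_im, sub_zero]
  field_simp
  ring

theorem im_cauchy_eq_neg_pi_mul_integral_cauchyPDFReal (μ : Measure ℝ) [IsFiniteMeasure μ]
    (hw : 0 < w.im) :
    (cauchy μ w).im = -Real.pi * ∫ x, cauchyPDFReal w.re w.im.toNNReal x ∂μ := by
  rw [cauchy, ← integral_const_mul]
  exact (integral_im (integrable_inv_sub_ofReal μ hw.ne')).symm.trans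
    (integral_congr_ae (ae_of_all _ (im_inv_sub_ofReal hw)))

end CauchyTransform

theorem im_cauchy_mem_Ioo_general (μ : Measure ℝ) [IsProbabilityMeasure μ]
    (hle : μ ≤ volume) :
    ∀ w : ℂ, 0 < w.im → -Real.pi < (cauchy μ w).im ∧ (cauchy μ w).im < 0 := by
  intro w hw
  have hγ : w.im.toNNReal ≠ 0 := by simpa using hw
  have hp := cauchyPDF_pos w.re hγ
  have hμ_lt : μ < volume := lt_of_le_of_ne hle fun h ↦ by simpa [← h] using Real.volume_univ
  have hpos := integral_pos_of_forall_pos hp ((integrable_cauchyPDFReal w.re).mono_measure hle)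
  have hlt := integral_lt_integral_of_measure_lt hμ_lt hp (integrable_cauchyPDFReal w.re)
  rw [integral_cauchyPDFReal_eq_one w.re hγ] at hlt
  rw [im_cauchy_eq_neg_pi_mul_integral_cauchyPDFReal μ hw]
  constructor <;> nlinarith [Real.pi_pos]

/-- For every `w` in the open upper half-plane, `-π < Im C(w) < 0`. -/
theorem im_cauchy_mem_Ioo (μ : Measure ℝ) (a b : ℝ) [IsProbabilityMeasure μ]
    (hle : μ ≤ volume) (hsupp : msupport μ ⊆ Set.Icc a b)
    (ha : a ∈ msupport μ) (hb : b ∈ msupport μ) (hab : 1 < b - a) :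
    ∀ w : ℂ, 0 < w.im → -Real.pi < (cauchy μ w).im ∧ (cauchy μ w).im < 0 :=
  im_cauchy_mem_Ioo_general μ hle
end
end

section
/- Writing μ₁ = ∫ x dμ(x) and μ₂ = ∫ x² dμ(x), one has a + 1/2 < μ₁ < b − 1/2 and μ₂ − μ₁² > 1/12. -/
/-!
A probability measure dominated by Lebesgue measure cannot be more concentrated than a uniform
distribution on an interval of length one (bathtub principle). Hence `∫ (x - a) dμ` is at least
the value `1/2` for the uniform law on `[a, a + 1]`, and `∫ (x - m)² dμ` is at least the value
`1/12` for the uniform law on `[m - 1/2, m + 1/2]`. Both bounds are strict because `μ` charges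
every neighbourhood of the far endpoint of its support, where the integrand exceeds its value on
the optimal interval.
-/

open MeasureTheory Complex Filter Set

noncomputable section

section Bathtub

variable {α : Type*} [MeasurableSpace α] {μ ν : Measure α}

/-- Write `φ = c - (c - φ)⁺ + (φ - c)⁺`: since `μ ≤ ν` and `(c - φ)⁺` vanishes `μ`-a.e. off `u`,
the `μ`-integral of `(c - φ)⁺` is at most its `ν`-integral over `u`. -/
theorem sub_setIntegral_lt_integral_of_le [IsProbabilityMeasure μ] (hμν : μ ≤ ν)
    {φ : α → ℝ} (hφ : Integrable φ μ) {c : ℝ} {u : Set α} (hu : MeasurableSet u)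
    (hφu : ∀ x ∈ u, φ x ≤ c) (hcφ : ∀ᵐ x ∂μ, x ∉ u → c ≤ φ x)
    (hint : IntegrableOn (fun x => c - φ x) u ν) (hpos : μ {x | c < φ x} ≠ 0) :
    c - ∫ x in u, c - φ x ∂ν < ∫ x, φ x ∂μ := by
  have hbelow : Integrable (fun x => max (c - φ x) 0) μ :=
    ((integrable_const c).sub hφ).pos_part
  have habove : Integrable (fun x => max (φ x - c) 0) μ := (hφ.sub (integrable_const c)).pos_part
  have hsplit : ∫ x, φ x ∂μ = c - ∫ x, max (c - φ x) 0 ∂μ + ∫ x, max (φ x - c) 0 ∂μ := by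
    have hφ_eq : ∀ x, φ x = c - max (c - φ x) 0 + max (φ x - c) 0 := fun x => by
      rcases le_total (φ x) c with h | h
      · rw [max_eq_left (by linarith), max_eq_right (by linarith)]; ring
      · rw [max_eq_right (by linarith), max_eq_left (by linarith)]; ring
    have hc_sub : Integrable (fun x => c - max (c - φ x) 0) μ := (integrable_const c).sub hbelow
    rw [integral_congr_ae (.of_forall hφ_eq), integral_add hc_sub habove,
      integral_sub (integrable_const c) hbelow, integral_const, probReal_univ, one_smul]
  have hbelow_le : ∫ x, max (c - φ x) 0 ∂μ ≤ ∫ x in u, c - φ x ∂ν := by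
    have hind : (fun x => max (c - φ x) 0) =ᵐ[μ] u.indicator fun x => c - φ x := by
      filter_upwards [hcφ] with x hx
      by_cases hxu : x ∈ u
      · rw [indicator_of_mem hxu, max_eq_left (sub_nonneg.2 (hφu x hxu))]
      · rw [indicator_of_notMem hxu, max_eq_right (sub_nonpos.2 (hx hxu))]
    calc ∫ x, max (c - φ x) 0 ∂μ = ∫ x, u.indicator (fun x => c - φ x) x ∂μ :=
          integral_congr_ae hind
      _ ≤ ∫ x, u.indicator (fun x => c - φ x) x ∂ν :=
          integral_mono_measure hμν (.of_forall (indicator_nonneg fun x hx => sub_nonneg.2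
            (hφu x hx))) (hint.integrable_indicator hu)
      _ = ∫ x in u, c - φ x ∂ν := integral_indicator hu
  have habove_pos : 0 < ∫ x, max (φ x - c) 0 ∂μ := by
    refine (integral_pos_iff_support_of_nonneg (f := fun x => max (φ x - c) 0)
      (fun x => le_max_right _ _) habove).2 ?_
    have hsupp : Function.support (fun x => max (φ x - c) 0) = {x | c < φ x} := by
      ext x; simp
    rw [hsupp]
    exact pos_iff_ne_zero.2 hpos
  linarith

end Bathtub

theorem setIntegral_Icc_add_one_sub (a : ℝ) : ∫ x in Icc a (a + 1), (a + 1 - x) = 1 / 2 := by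
  rw [integral_Icc_eq_integral_Ioc, ← intervalIntegral.integral_of_le (by linarith),
    intervalIntegral.integral_comp_sub_left (fun x => x)]
  norm_num [integral_id]

theorem setIntegral_Icc_sub_sub_one (b : ℝ) : ∫ x in Icc (b - 1) b, (x - (b - 1)) = 1 / 2 := by
  rw [integral_Icc_eq_integral_Ioc, ← intervalIntegral.integral_of_le (by linarith),
    intervalIntegral.integral_comp_sub_right (fun x => x)]
  norm_num [integral_id]

theorem setIntegral_Icc_quarter_sub_sq (m : ℝ) :
    ∫ x in Icc (m - 1 / 2) (m + 1 / 2), (1 / 4 - (x - m) ^ 2) = 1 / 6 := by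
  rw [integral_Icc_eq_integral_Ioc, ← intervalIntegral.integral_of_le (by linarith),
    intervalIntegral.integral_comp_sub_right (fun x => 1 / 4 - x ^ 2),
    intervalIntegral.integral_sub intervalIntegrable_const
      ((continuous_pow 2).intervalIntegrable _ _), integral_pow]
  norm_num

section Moments

variable {μ : Measure ℝ} [IsProbabilityMeasure μ]

theorem add_half_lt_integral_id (hle : μ ≤ volume) (hint : Integrable (fun x => x) μ) {a : ℝ}
    (ha : ∀ᵐ x ∂μ, a ≤ x) (hpos : μ (Ioi (a + 1)) ≠ 0) : a + 1 / 2 < ∫ x, x ∂μ := by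
  have h := sub_setIntegral_lt_integral_of_le (φ := fun x => x) (c := a + 1) hle hint
    measurableSet_Icc (fun x hx => hx.2) (ha.mono fun x hax hx => le_of_not_ge fun h => hx ⟨hax, h⟩)
    (by fun_prop : Continuous fun x : ℝ => a + 1 - x).integrableOn_Icc hpos
  rw [setIntegral_Icc_add_one_sub] at h
  linarith

theorem integral_id_lt_sub_half (hle : μ ≤ volume) (hint : Integrable (fun x => x) μ) {b : ℝ}
    (hb : ∀ᵐ x ∂μ, x ≤ b) (hpos : μ (Iio (b - 1)) ≠ 0) : ∫ x, x ∂μ < b - 1 / 2 := by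
  have hset : {x : ℝ | 1 - b < -x} = Iio (b - 1) := by
    ext x; simp only [mem_ofPred_eq, mem_Iio]; constructor <;> intro <;> linarith
  have h := sub_setIntegral_lt_integral_of_le (φ := fun x => -x) (c := 1 - b)
    (u := Icc (b - 1) b) hle hint.neg
    measurableSet_Icc (fun x hx => by linarith [hx.1])
    (hb.mono fun x hbx hx => by
      have : x < b - 1 := lt_of_not_ge fun h => hx ⟨h, hbx⟩
      linarith)
    (by fun_prop : Continuous fun x : ℝ => 1 - b - -x).integrableOn_Icc (hset ▸ hpos)
  have hcomp : ∫ x in Icc (b - 1) b, (1 - b - -x) = 1 / 2 := by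
    rw [← setIntegral_Icc_sub_sub_one b]; congr 1; ext x; ring
  rw [hcomp, integral_neg] at h
  linarith

theorem twelfth_lt_integral_sub_sq (hle : μ ≤ volume) {m : ℝ}
    (hint : Integrable (fun x => (x - m) ^ 2) μ) (hpos : μ {x | 1 / 4 < (x - m) ^ 2} ≠ 0) :
    1 / 12 < ∫ x, (x - m) ^ 2 ∂μ := by
  have h := sub_setIntegral_lt_integral_of_le (u := Icc (m - 1 / 2) (m + 1 / 2)) hle hint
    measurableSet_Icc (fun x hx => by nlinarith [hx.1, hx.2])
    (.of_forall fun x hx => by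
      rw [mem_Icc, not_and_or, not_le, not_le] at hx
      rcases hx with hx | hx <;> nlinarith)
    (by fun_prop : Continuous fun x : ℝ => 1 / 4 - (x - m) ^ 2).integrableOn_Icc hpos
  rw [setIntegral_Icc_quarter_sub_sq] at h
  linarith

end Moments

theorem measure_compl_msupport (μ : Measure ℝ) : μ (msupport μ)ᶜ = 0 := by
  refine measure_null_of_locally_null _ fun x hx => ?_
  obtain ⟨U, hU, hU0⟩ : ∃ U ∈ nhds x, μ U = 0 := by simpa [msupport] using hx
  exact ⟨U, nhdsWithin_le_nhds hU, hU0⟩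

/-- With `μ₁ = ∫ x dμ(x)` and `μ₂ = ∫ x² dμ(x)`, one has
`a + 1/2 < μ₁ < b - 1/2` and `μ₂ - μ₁² > 1/12`. -/
theorem moment_bounds (μ : Measure ℝ) (a b : ℝ) [IsProbabilityMeasure μ]
    (hle : μ ≤ volume) (hsupp : msupport μ ⊆ Set.Icc a b)
    (ha : a ∈ msupport μ) (hb : b ∈ msupport μ) (hab : 1 < b - a) :
    a + 1 / 2 < ∫ x, x ∂μ ∧ (∫ x, x ∂μ) < b - 1 / 2 ∧
      1 / 12 < (∫ x, x ^ 2 ∂μ) - (∫ x, x ∂μ) ^ 2 := by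
  have hIcc : ∀ᵐ x ∂μ, x ∈ Icc a b :=
    measure_mono_null (compl_subset_compl.2 hsupp) (measure_compl_msupport μ)
  have hL2 : MemLp id 2 μ := memLp_of_bounded hIcc aestronglyMeasurable_id 2
  have hmean_low := add_half_lt_integral_id hle (hL2.integrable one_le_two)
    (hIcc.mono fun x hx => hx.1) (hb _ (Ioi_mem_nhds (by linarith)))
  have hmean_up := integral_id_lt_sub_half hle (hL2.integrable one_le_two)
    (hIcc.mono fun x hx => hx.2) (ha _ (Iio_mem_nhds (by linarith)))
  set m := ∫ x, x ∂μ
  have hvar : 1 / 12 < ∫ x, (x - m) ^ 2 ∂μ := by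
    refine twelfth_lt_integral_sub_sq hle (hL2.sub (memLp_const m)).integrable_sq fun h0 => ?_
    refine hb _ (Ioi_mem_nhds (by linarith : m + 1 / 2 < b)) (measure_mono_null (fun x hx => ?_) h0)
    show 1 / 4 < (x - m) ^ 2
    nlinarith [mem_Ioi.1 hx]
  have hvar_eq : ∫ x, (x - m) ^ 2 ∂μ = (∫ x, x ^ 2 ∂μ) - m ^ 2 :=
    (ProbabilityTheory.variance_eq_integral measurable_id.aemeasurable).symm.trans
      (ProbabilityTheory.variance_eq_sub hL2)
  exact ⟨hmean_low, hmean_up, hvar_eq ▸ hvar⟩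
end
end

section
/- Let w ∈ ℍ and let (χ₁, η₁), (χ₂, η₂) ∈ ℝ² with η₁ < 1 and η₂ < 1. If f′_{(χ₁,η₁)}(w) = 0 and f′_{(χ₂,η₂)}(w) = 0, then χ₁ = χ₂ and η₁ = η₂. -/
open MeasureTheory Complex Filter Set

noncomputable section

/-- `f′_{(χ,η)}(w) = C(w) + Log (w - χ) - Log (w - χ - η + 1)`. -/
def fprime (μ : Measure ℝ) (χ η : ℝ) (w : ℂ) : ℂ :=
  cauchy μ w + Complex.log (w - (χ : ℂ)) - Complex.log (w - (χ : ℂ) - (η : ℂ) + 1)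

/-- `χ_L(w) = w + (w - w̄)(e^{C(w̄)} - 1)/(e^{C(w)} - e^{C(w̄)})`. -/
def chiL (μ : Measure ℝ) (w : ℂ) : ℂ :=
  w + (w - (starRingEnd ℂ) w) * (Complex.exp (cauchy μ ((starRingEnd ℂ) w)) - 1) /
    (Complex.exp (cauchy μ w) - Complex.exp (cauchy μ ((starRingEnd ℂ) w)))

/-- `η_L(w) = 1 + (w - w̄)(e^{C(w)} - 1)(e^{C(w̄)} - 1)/(e^{C(w)} - e^{C(w̄)})`. -/
def etaL (μ : Measure ℝ) (w : ℂ) : ℂ :=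
  1 + (w - (starRingEnd ℂ) w) * (Complex.exp (cauchy μ w) - 1) *
      (Complex.exp (cauchy μ ((starRingEnd ℂ) w)) - 1) /
    (Complex.exp (cauchy μ w) - Complex.exp (cauchy μ ((starRingEnd ℂ) w)))

/-- If `η₁, η₂ < 1` and `w ∈ ℍ` is a common root of `f′_{(χ₁,η₁)}` and `f′_{(χ₂,η₂)}`,
then `(χ₁, η₁) = (χ₂, η₂)`. -/
theorem fprime_root_unique_params (μ : Measure ℝ) (a b : ℝ) [IsProbabilityMeasure μ]
    (hle : μ ≤ volume) (hsupp : msupport μ ⊆ Set.Icc a b)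
    (ha : a ∈ msupport μ) (hb : b ∈ msupport μ) (hab : 1 < b - a)
    (w : ℂ) (hw : 0 < w.im) (χ₁ η₁ χ₂ η₂ : ℝ) (hη₁ : η₁ < 1) (hη₂ : η₂ < 1)
    (h1 : fprime μ χ₁ η₁ w = 0) (h2 : fprime μ χ₂ η₂ w = 0) :
    χ₁ = χ₂ ∧ η₁ = η₂ := by
  set E := Complex.exp (cauchy μ w) with hE
  have key : ∀ χ η : ℝ, fprime μ χ η w = 0 →
      (E - 1) * (w - (χ : ℂ)) = 1 - (η : ℂ) := by
    intro χ η h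
    have h0 : (w - (χ : ℂ)) ≠ 0 := by
      intro hc
      have := congrArg Complex.im hc
      simp at this; linarith
    have h0' : (w - (χ : ℂ) - (η : ℂ) + 1) ≠ 0 := by
      intro hc
      have := congrArg Complex.im hc
      simp at this; linarith
    have hc : cauchy μ w = Complex.log (w - (χ : ℂ) - (η : ℂ) + 1)
        - Complex.log (w - (χ : ℂ)) := by
      have := h
      unfold fprime at this
      linear_combination this
    have hexp : E * (w - (χ : ℂ)) = w - (χ : ℂ) - (η : ℂ) + 1 := by
      rw [hE, hc, Complex.exp_sub, Complex.exp_log h0', Complex.exp_log h0]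
      field_simp
    linear_combination hexp
  have k1 := key χ₁ η₁ h1
  have k2 := key χ₂ η₂ h2
  have hne1 : (1 : ℂ) - (η₁ : ℂ) ≠ 0 := by
    intro hc
    have := congrArg Complex.re hc
    simp at this; linarith
  have hEne : E - 1 ≠ 0 := by
    intro hc
    rw [hc, zero_mul] at k1
    exact hne1 k1.symm
  have cross : (1 - (η₂ : ℂ)) * (w - (χ₁ : ℂ)) = (1 - (η₁ : ℂ)) * (w - (χ₂ : ℂ)) := by
    apply mul_left_cancel₀ hEne
    linear_combination (1 - (η₂ : ℂ)) * k1 - (1 - (η₁ : ℂ)) * k2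
  have him := congrArg Complex.im cross
  simp [Complex.mul_im, Complex.sub_im, Complex.sub_re, Complex.ofReal_im,
    Complex.ofReal_re] at him
  have hη : η₁ = η₂ := by
    rcases him with h | h
    · nlinarith
    · linarith
  refine ⟨?_, hη⟩
  rw [hη] at cross
  have : w - (χ₁ : ℂ) = w - (χ₂ : ℂ) := by
    have hne2 : (1 : ℂ) - (η₂ : ℂ) ≠ 0 := by
      intro hc
      have := congrArg Complex.re hc
      simp at this; linarith
    exact mul_left_cancel₀ hne2 cross
  have := congrArg Complex.re this
  simp at this
  exact this
end
end

section
/- Suppose t₂ < t₁ with (t₂, t₁) ⊆ [a, b], and suppose μ agrees with Lebesgue measure on (t₂, t₁), i.e. μ(E) = λ(E) for every Borel set E ⊆ (t₂, t₁). Set p₁ = μ([t₁, b]) and p₂ = μ([a, t₂]). Then for every t ∈ (t₂, t₁): −∫_{ℝ ∖ (t₂,t₁)} (t − x)⁻² dμ(x) − 1/(t − t₁) + 1/(t − t₂) ≥ 1/((t − t₂ + p₂)(t₁ − t + p₁)) > 0. -/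
/-!
Left of `t₂` the measure `μ ≤ λ` carries mass `p₂ = μ(-∞, t₂]`. Since `x ↦ (t - x)⁻²` increases
on `(-∞, t₂]`, its `μ`-integral there is at most its Lebesgue integral over `[t₂ - p₂, t₂]`
(bathtub principle), namely `1/(t - t₂) - 1/(t - t₂ + p₂)`; symmetrically on `[t₁, ∞)`.
As `μ` has total mass `p₂ + (t₁ - t₂) + p₁ = 1`, the numbers `X = t - t₂ + p₂` and
`Y = t₁ - t + p₁` satisfy `X + Y = 1`, so `1/(XY) = 1/X + 1/Y` and the two bounds add up to
the claim.
-/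

open MeasureTheory Complex Filter Set

noncomputable section

theorem msupport_eq_support (μ : Measure ℝ) : msupport μ = μ.support := by
  ext x
  simp [msupport, Measure.mem_support_iff_forall, pos_iff_ne_zero]

theorem measure_Icc_eq_measure_Iic_of_msupport_subset {μ : Measure ℝ} {a : ℝ}
    (hsupp : msupport μ ⊆ Ici a) (s : ℝ) : μ (Icc a s) = μ (Iic s) := by
  rw [← Ici_inter_Iic, inter_comm]
  exact measure_inter_conull
    (measure_mono_null (compl_subset_compl.2 hsupp) (measure_compl_msupport μ))

theorem measure_Icc_eq_measure_Ici_of_msupport_subset {μ : Measure ℝ} {b : ℝ}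
    (hsupp : msupport μ ⊆ Iic b) (s : ℝ) : μ (Icc s b) = μ (Ici s) := by
  rw [← Ici_inter_Iic]
  exact measure_inter_conull
    (measure_mono_null (compl_subset_compl.2 hsupp) (measure_compl_msupport μ))

theorem measureReal_Iic_add_Ioo_add_Ici (μ : Measure ℝ) [IsProbabilityMeasure μ] {a b : ℝ}
    (hab : a < b) : μ.real (Iic a) + μ.real (Ioo a b) + μ.real (Ici b) = 1 := by
  rw [← measureReal_union ((Iic_disjoint_Ioi le_rfl).mono_right Ioo_subset_Ioi_self)
      measurableSet_Ioo,
    ← measureReal_union (by simp [Iic_union_Ioo_eq_Iio hab]) measurableSet_Ici,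
    Iic_union_Ioo_eq_Iio hab, Iio_union_Ici, probReal_univ]

theorem setIntegral_Iic_le_intervalIntegral_of_le_volume {μ : Measure ℝ} [IsFiniteMeasure μ]
    (hμ : μ ≤ volume) {g : ℝ → ℝ} {s : ℝ} (hg : MonotoneOn g (Iic s))
    (hint : IntegrableOn g (Iic s) μ) :
    ∫ x in Iic s, g x ∂μ ≤ ∫ x in s - μ.real (Iic s)..s, g x := by
  set p := μ.real (Iic s)
  -- `g - k` is `≤ 0` below `s - p` and `≥ 0` on `(s - p, s]`, where `μ ≤ volume` applies.
  set k := g (s - p)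
  have hp : 0 ≤ p := measureReal_nonneg
  have hks : s - p ∈ Iic s := by simp [hp]
  have hsplit : Iic s = Iic (s - p) ∪ Ioc (s - p) s := (Iic_union_Ioc_eq_Iic (by linarith)).symm
  have hgk : IntegrableOn (fun x => g x - k) (Iic s) μ := hint.sub (integrableOn_const (by simp))
  have hgvol : IntegrableOn g (Ioc (s - p) s) :=
    ((hg.mono Icc_subset_Iic_self).integrableOn_isCompact isCompact_Icc).mono_set
      Ioc_subset_Icc_self
  have below : ∫ x in Iic (s - p), g x - k ∂μ ≤ 0 :=
    setIntegral_nonpos measurableSet_Iic fun x hx =>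
      sub_nonpos.2 (hg (Iic_subset_Iic.2 (by linarith) hx) hks hx)
  have above : ∫ x in Ioc (s - p) s, g x - k ∂μ ≤ ∫ x in Ioc (s - p) s, g x - k :=
    integral_mono_measure (Measure.restrict_mono le_rfl hμ)
      ((ae_restrict_iff' measurableSet_Ioc).2 (Eventually.of_forall fun x hx =>
        sub_nonneg.2 (hg hks (Ioc_subset_Iic_self hx) hx.1.le)))
      (hgvol.sub (integrableOn_const (by simp)))
  calc ∫ x in Iic s, g x ∂μ = ∫ x in Iic s, g x - k ∂μ + p * k := by
        rw [integral_sub hint (integrableOn_const (by simp)), setIntegral_const, smul_eq_mul]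
        ring
    _ = ∫ x in Iic (s - p), g x - k ∂μ + ∫ x in Ioc (s - p) s, g x - k ∂μ + p * k := by
        rw [hsplit, setIntegral_union (Iic_disjoint_Ioc le_rfl) measurableSet_Ioc
          (hgk.mono_set (hsplit ▸ subset_union_left)) (hgk.mono_set (hsplit ▸ subset_union_right))]
    _ ≤ (∫ x in Ioc (s - p) s, g x - k) + p * k := by linarith
    _ = ∫ x in s - p..s, g x := by
        rw [integral_sub hgvol (integrableOn_const (by simp)), setIntegral_const,
          intervalIntegral.integral_of_le (by linarith),
          Real.volume_real_Ioc_of_le (by linarith), smul_eq_mul]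
        ring

theorem integral_inv_sq_sub_of_lt {s t p : ℝ} (hst : s < t) (hp : 0 ≤ p) :
    ∫ x in s - p..s, ((t - x) ^ 2)⁻¹ = 1 / (t - s) - 1 / (t - s + p) := by
  have hderiv : ∀ x ∈ uIcc (s - p) s, HasDerivAt (fun y => (t - y)⁻¹) ((t - x) ^ 2)⁻¹ x := by
    intro x hx
    rw [uIcc_of_le (by linarith)] at hx
    have hx' : t - x ≠ 0 := by linarith [hx.2]
    refine (((hasDerivAt_id x).const_sub t).fun_inv hx').congr_deriv ?_
    simp only [id, neg_neg, one_div]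
  rw [intervalIntegral.integral_eq_sub_of_hasDerivAt hderiv]
  · ring_nf
  · refine ContinuousOn.intervalIntegrable fun x hx => ?_
    rw [uIcc_of_le (by linarith)] at hx
    have hx' : t - x ≠ 0 := by linarith [hx.2]
    exact ((continuousAt_const.sub continuousAt_id).pow 2 |>.inv₀
      (pow_ne_zero 2 hx')).continuousWithinAt

theorem integrableOn_inv_sq_sub {μ : Measure ℝ} [IsFiniteMeasure μ] {S : Set ℝ}
    (hS : MeasurableSet S) {t d : ℝ} (hd : 0 < d) (hdist : ∀ x ∈ S, d ≤ |t - x|) :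
    IntegrableOn (fun x => ((t - x) ^ 2)⁻¹) S μ := by
  refine IntegrableOn.of_bound (measure_lt_top μ S) (by fun_prop) (d ^ 2)⁻¹
    ((ae_restrict_iff' hS).2 (Eventually.of_forall fun x hx => ?_))
  rw [Real.norm_eq_abs, abs_inv, abs_sq, ← sq_abs]
  exact inv_anti₀ (by positivity) (pow_le_pow_left₀ hd.le (hdist x hx) 2)

theorem integrableOn_Iic_inv_sq_sub {μ : Measure ℝ} [IsFiniteMeasure μ] {s t : ℝ}
    (hst : s < t) : IntegrableOn (fun x => ((t - x) ^ 2)⁻¹) (Iic s) μ :=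
  integrableOn_inv_sq_sub measurableSet_Iic (sub_pos.2 hst) fun x (hx : x ≤ s) => by
    rw [abs_of_pos (by linarith)]; linarith

theorem integrableOn_Ici_inv_sq_sub {μ : Measure ℝ} [IsFiniteMeasure μ] {s t : ℝ}
    (hts : t < s) : IntegrableOn (fun x => ((t - x) ^ 2)⁻¹) (Ici s) μ :=
  integrableOn_inv_sq_sub measurableSet_Ici (sub_pos.2 hts) fun x (hx : s ≤ x) => by
    rw [abs_of_neg (by linarith)]; linarith

theorem setIntegral_Iic_inv_sq_sub_le {μ : Measure ℝ} [IsFiniteMeasure μ] (hμ : μ ≤ volume)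
    {s t : ℝ} (hst : s < t) :
    ∫ x in Iic s, ((t - x) ^ 2)⁻¹ ∂μ ≤ 1 / (t - s) - 1 / (t - s + μ.real (Iic s)) := by
  have hmono : MonotoneOn (fun x => ((t - x) ^ 2)⁻¹) (Iic s) := fun x hx y hy hxy =>
    inv_anti₀ (by nlinarith [mem_Iic.1 hy]) (by nlinarith [mem_Iic.1 hy])
  exact (setIntegral_Iic_le_intervalIntegral_of_le_volume hμ hmono
    (integrableOn_Iic_inv_sq_sub hst)).trans_eq (integral_inv_sq_sub_of_lt hst measureReal_nonneg)

theorem setIntegral_Ici_inv_sq_sub_le {μ : Measure ℝ} [IsFiniteMeasure μ] (hμ : μ ≤ volume)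
    {s t : ℝ} (hts : t < s) :
    ∫ x in Ici s, ((t - x) ^ 2)⁻¹ ∂μ ≤ 1 / (s - t) - 1 / (s - t + μ.real (Ici s)) := by
  have hneg : MeasurableEmbedding (fun x : ℝ => -x) := (Homeomorph.neg ℝ).measurableEmbedding
  have hpre : (fun x : ℝ => -x) ⁻¹' Iic (-s) = Ici s := by ext; simp
  have hμneg : μ.map (fun x => -x) ≤ volume :=
    (Measure.map_mono hμ measurable_neg).trans_eq (Measure.map_neg_eq_self volume)
  have h := setIntegral_Iic_inv_sq_sub_le hμneg (neg_lt_neg hts) (t := -t)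
  rw [hneg.setIntegral_map, map_measureReal_apply measurable_neg measurableSet_Iic, hpre,
    neg_sub_neg] at h
  have hsq : ∀ x : ℝ, (-t - -x) ^ 2 = (t - x) ^ 2 := fun x => by ring
  simpa only [hsq] using h

theorem setIntegral_compl_Ioo_inv_sq_sub_le {μ : Measure ℝ} [IsFiniteMeasure μ]
    (hμ : μ ≤ volume) {t₁ t₂ t : ℝ} (ht₂ : t₂ < t) (ht₁ : t < t₁) :
    ∫ x in (Ioo t₂ t₁)ᶜ, ((t - x) ^ 2)⁻¹ ∂μ ≤
      1 / (t - t₂) - 1 / (t - t₂ + μ.real (Iic t₂)) +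
        (1 / (t₁ - t) - 1 / (t₁ - t + μ.real (Ici t₁))) := by
  have hcompl : (Ioo t₂ t₁)ᶜ = Iic t₂ ∪ Ici t₁ := by
    ext x
    simp only [mem_compl_iff, mem_Ioo, not_and_or, not_lt, mem_union, mem_Iic, mem_Ici]
  rw [hcompl, setIntegral_union (Iic_disjoint_Ici.2 (by linarith)) measurableSet_Ici
    (integrableOn_Iic_inv_sq_sub ht₂) (integrableOn_Ici_inv_sq_sub ht₁)]
  exact add_le_add (setIntegral_Iic_inv_sq_sub_le hμ ht₂) (setIntegral_Ici_inv_sq_sub_le hμ ht₁)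

theorem cder_bound_on_lebesgue_interval_general (μ : Measure ℝ) (a b : ℝ) [IsProbabilityMeasure μ]
    (hle : μ ≤ volume) (hsupp : msupport μ ⊆ Set.Icc a b)
    (t₁ t₂ : ℝ) (ht : t₂ < t₁)
    (hagree : ∀ E : Set ℝ, MeasurableSet E → E ⊆ Set.Ioo t₂ t₁ → μ E = volume E) :
    ∀ t ∈ Set.Ioo t₂ t₁,
      1 / ((t - t₂ + (μ (Set.Icc a t₂)).toReal) * (t₁ - t + (μ (Set.Icc t₁ b)).toReal)) ≤
        -(∫ x in (Set.Ioo t₂ t₁)ᶜ, ((t - x) ^ 2)⁻¹ ∂μ) - 1 / (t - t₁) + 1 / (t - t₂) ∧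
      0 < 1 / ((t - t₂ + (μ (Set.Icc a t₂)).toReal) *
          (t₁ - t + (μ (Set.Icc t₁ b)).toReal)) := by
  rintro t ⟨ht₂, ht₁⟩
  have hleft := measure_Icc_eq_measure_Iic_of_msupport_subset
    (hsupp.trans Icc_subset_Ici_self) t₂
  have hright := measure_Icc_eq_measure_Ici_of_msupport_subset
    (hsupp.trans Icc_subset_Iic_self) t₁
  have hmid : μ.real (Ioo t₂ t₁) = t₁ - t₂ := by
    rw [measureReal_def, hagree _ measurableSet_Ioo subset_rfl, Real.volume_Ioo,
      ENNReal.toReal_ofReal (by linarith)]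
  have hmass := measureReal_Iic_add_Ioo_add_Ici μ ht
  have hbound := setIntegral_compl_Ioo_inv_sq_sub_le hle ht₂ ht₁
  simp only [measureReal_def, ← hleft, ← hright] at hmass hmid hbound
  set p₂ := (μ (Icc a t₂)).toReal
  set p₁ := (μ (Icc t₁ b)).toReal
  have hX : 0 < t - t₂ + p₂ := by linarith [ENNReal.toReal_nonneg (a := μ (Icc a t₂))]
  have hY : 0 < t₁ - t + p₁ := by linarith [ENNReal.toReal_nonneg (a := μ (Icc t₁ b))]
  have hsum : 1 / ((t - t₂ + p₂) * (t₁ - t + p₁)) = 1 / (t - t₂ + p₂) + 1 / (t₁ - t + p₁) := by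
    field_simp
    linarith
  have hneg : 1 / (t - t₁) = -(1 / (t₁ - t)) := by rw [← one_div_neg_eq_neg_one_div, neg_sub]
  refine ⟨?_, by positivity⟩
  rw [hsum, hneg]
  linarith

/-- If `μ` agrees with Lebesgue measure on `(t₂, t₁) ⊆ [a, b]` then, with
`p₁ = μ[t₁, b]` and `p₂ = μ[a, t₂]`, for every `t ∈ (t₂, t₁)`:
`-∫_{ℝ∖(t₂,t₁)} (t-x)⁻² dμ - 1/(t-t₁) + 1/(t-t₂) ≥ 1/((t-t₂+p₂)(t₁-t+p₁)) > 0`. -/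
theorem cder_bound_on_lebesgue_interval (μ : Measure ℝ) (a b : ℝ) [IsProbabilityMeasure μ]
    (hle : μ ≤ volume) (hsupp : msupport μ ⊆ Set.Icc a b)
    (ha : a ∈ msupport μ) (hb : b ∈ msupport μ) (hab : 1 < b - a)
    (t₁ t₂ : ℝ) (ht : t₂ < t₁) (hsub : Set.Ioo t₂ t₁ ⊆ Set.Icc a b)
    (hagree : ∀ E : Set ℝ, MeasurableSet E → E ⊆ Set.Ioo t₂ t₁ → μ E = volume E) :
    ∀ t ∈ Set.Ioo t₂ t₁,
      1 / ((t - t₂ + (μ (Set.Icc a t₂)).toReal) * (t₁ - t + (μ (Set.Icc t₁ b)).toReal)) ≤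
        -(∫ x in (Set.Ioo t₂ t₁)ᶜ, ((t - x) ^ 2)⁻¹ ∂μ) - 1 / (t - t₁) + 1 / (t - t₂) ∧
      0 < 1 / ((t - t₂ + (μ (Set.Icc a t₂)).toReal) *
          (t₁ - t + (μ (Set.Icc t₁ b)).toReal)) :=
  cder_bound_on_lebesgue_interval_general μ a b hle hsupp t₁ t₂ ht hagree
end
end

section
/- Let t ∈ ℝ ∖ supp(μ) and let (wₙ) be a sequence in ℍ with wₙ → t. Then χ_L(wₙ) → χ_E(t) and η_L(wₙ) → η_E(t) as n → ∞. -/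
open MeasureTheory Complex Filter Set

noncomputable section

/-- The real Cauchy transform `C(t) = ∫ (t - x)⁻¹ dμ(x)` at a real point. -/
def Creal (μ : Measure ℝ) (t : ℝ) : ℝ := ∫ x, (t - x)⁻¹ ∂μ

/-- `C′(t) = -∫ (t - x)⁻² dμ(x)`. -/
def Cder (μ : Measure ℝ) (t : ℝ) : ℝ := -∫ x, ((t - x) ^ 2)⁻¹ ∂μ

/-- `χ_E(t) = t + (e^{C(t)} - 1)/(e^{C(t)} C′(t))`. -/
def chiE (μ : Measure ℝ) (t : ℝ) : ℝ :=
  t + (Real.exp (Creal μ t) - 1) / (Real.exp (Creal μ t) * Cder μ t)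

/-- `η_E(t) = 1 + (e^{C(t)} - 1)²/(e^{C(t)} C′(t))`. -/
def etaE (μ : Measure ℝ) (t : ℝ) : ℝ :=
  1 + (Real.exp (Creal μ t) - 1) ^ 2 / (Real.exp (Creal μ t) * Cder μ t)

/-!
Away from `supp μ` the Cauchy transform `C` is holomorphic, it is real on the real axis, and
`C′(t) = -∫ (t - x)⁻² dμ(x) < 0` there. With `E = exp ∘ C`, both `χ_L(w)` and `η_L(w)` are
rational expressions in `w`, `E(w)`, `E(w̄)` and the slope `(E(w) - E(w̄)) / (w - w̄)`. As `w → t`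
both `w` and `w̄` tend to `t`, so strict differentiability of `E` at `t` (which is where
holomorphy, not mere differentiability along `ℝ`, is needed) sends this slope to
`E(t) C′(t) ≠ 0`, and the limits follow by continuity.
-/

open ComplexConjugate

theorem HasStrictDerivAt.tendsto_slope {𝕜 F α : Type*} [NontriviallyNormedField 𝕜]
    [NormedAddCommGroup F] [NormedSpace 𝕜 F] {f : 𝕜 → F} {f' : F} {x : 𝕜} {l : Filter α}
    {u v : α → 𝕜} (hf : HasStrictDerivAt f f' x) (hu : Tendsto u l (nhds x))
    (hv : Tendsto v l (nhds x)) (huv : ∀ᶠ n in l, u n ≠ v n) :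
    Tendsto (fun n => slope f (u n) (v n)) l (nhds f') := by
  have h := (hf.hasStrictFDerivAt.isLittleO.comp_tendsto
    (hv.prodMk_nhds hu)).tendsto_inv_smul_nhds_zero.add_const f'
  rw [zero_add] at h
  refine h.congr' ?_
  filter_upwards [huv] with n hn
  simp [slope_def_module, smul_sub, sub_ne_zero.2 hn.symm]

section CauchyTransform

variable {μ : Measure ℝ} {t ε : ℝ}

theorem exists_pos_ae_le_dist_of_notMem_msupport (ht : t ∉ msupport μ) :
    ∃ ε > 0, ∀ᵐ x ∂μ, ε ≤ dist x t := by
  obtain ⟨U, hU, hμU⟩ : ∃ U ∈ nhds t, μ U = 0 := by simpa [msupport] using ht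
  obtain ⟨ε, hε, hball⟩ := Metric.mem_nhds_iff.mp hU
  refine ⟨ε, hε, measure_eq_zero_iff_ae_notMem.mp (measure_mono_null hball hμU) |>.mono ?_⟩
  intro x hx
  simpa [Metric.mem_ball] using hx

theorem half_lt_dist_ofReal {u : ℂ} {x : ℝ} (hu : dist u t < ε / 2) (hx : ε ≤ dist x t) :
    ε / 2 < dist u x := by
  have : dist (x : ℂ) t ≤ dist (x : ℂ) u + dist u t := dist_triangle _ _ _
  rw [Complex.isometry_ofReal.dist_eq, dist_comm (x : ℂ)] at this
  linarith

theorem hasDerivAt_cauchy [IsFiniteMeasure μ] (hμ : ∀ᵐ x ∂μ, ε ≤ dist x t) {w : ℂ}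
    (hw : w ∈ Metric.ball (t : ℂ) (ε / 2)) :
    HasDerivAt (cauchy μ) (∫ x, -((w - x) ^ 2)⁻¹ ∂μ) w := by
  have hε : 0 < ε := by
    have := dist_nonneg.trans_lt hw
    linarith
  have hmeas : ∀ u : ℂ, AEStronglyMeasurable (fun x : ℝ => (u - x)⁻¹) μ := fun u => by
    fun_prop
  have hdist : ∀ᵐ (x : ℝ) ∂μ, ∀ u ∈ Metric.ball (t : ℂ) (ε / 2), ε / 2 < dist u x := by
    filter_upwards [hμ] with x hx u hu using half_lt_dist_ofReal hu hx
  refine (hasDerivAt_integral_of_dominated_loc_of_deriv_le (bound := fun _ => ((ε / 2) ^ 2)⁻¹)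
    (F' := fun u (x : ℝ) => -((u - x) ^ 2)⁻¹) (Metric.isOpen_ball.mem_nhds hw)
    (.of_forall hmeas) ?_ (by fun_prop) ?_ (integrable_const _) ?_).2
  · refine .mono' (integrable_const (ε / 2)⁻¹) (hmeas w) ?_
    filter_upwards [hdist] with x hx
    rw [norm_inv, ← dist_eq_norm]
    exact inv_anti₀ (by positivity) (hx w hw).le
  · filter_upwards [hdist] with x hx u hu
    rw [norm_neg, norm_inv, norm_pow, ← dist_eq_norm]
    exact inv_anti₀ (by positivity) (pow_le_pow_left₀ (by positivity) (hx u hu).le 2)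
  · filter_upwards [hdist] with x hx u hu
    have hne : u - x ≠ 0 := sub_ne_zero.2 fun h => by
      have := hx u hu
      rw [h, dist_self] at this
      linarith
    simpa [neg_div] using ((hasDerivAt_id u).sub_const (x : ℂ)).fun_inv hne

theorem cauchy_ofReal (μ : Measure ℝ) (t : ℝ) : cauchy μ t = Creal μ t := by
  rw [cauchy, Creal, ← integral_complex_ofReal]
  push_cast
  rfl

theorem ofReal_Cder (μ : Measure ℝ) (t : ℝ) :
    (Cder μ t : ℂ) = -∫ x : ℝ, (((t : ℂ) - x) ^ 2)⁻¹ ∂μ := by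
  rw [Cder, Complex.ofReal_neg, ← integral_complex_ofReal]
  push_cast
  rfl

theorem hasStrictDerivAt_cauchy [IsFiniteMeasure μ] (ht : t ∉ msupport μ) :
    HasStrictDerivAt (cauchy μ) (Cder μ t) t := by
  obtain ⟨ε, hε, hμ⟩ := exists_pos_ae_le_dist_of_notMem_msupport ht
  have ht_mem : (t : ℂ) ∈ Metric.ball (t : ℂ) (ε / 2) := Metric.mem_ball_self (by positivity)
  have hdiff : DifferentiableOn ℂ (cauchy μ) (Metric.ball (t : ℂ) (ε / 2)) :=
    fun w hw => (hasDerivAt_cauchy hμ hw).differentiableAt.differentiableWithinAt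
  have := (hdiff.analyticAt (Metric.isOpen_ball.mem_nhds ht_mem)).hasStrictDerivAt
  rwa [(hasDerivAt_cauchy hμ ht_mem).deriv, integral_neg, ← ofReal_Cder] at this

theorem Cder_neg [IsFiniteMeasure μ] [NeZero μ] (ht : t ∉ msupport μ) : Cder μ t < 0 := by
  obtain ⟨ε, hε, hμ⟩ := exists_pos_ae_le_dist_of_notMem_msupport ht
  have hpos : ∀ᵐ x ∂μ, 0 < ((t - x) ^ 2)⁻¹ := hμ.mono fun x hx => by
    have : t - x ≠ 0 := by
      rw [sub_ne_zero, ← dist_pos, dist_comm]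
      exact hε.trans_le hx
    positivity
  have hint : Integrable (fun x => ((t - x) ^ 2)⁻¹) μ := by
    refine .mono' (integrable_const (ε ^ 2)⁻¹) (by fun_prop) (hμ.mono fun x hx => ?_)
    rw [Real.norm_eq_abs, abs_inv, abs_pow, abs_sub_comm, ← Real.dist_eq]
    exact inv_anti₀ (by positivity) (pow_le_pow_left₀ hε.le hx 2)
  rw [Cder, neg_lt_zero, integral_pos_iff_support_of_nonneg_ae (hpos.mono fun _ => le_of_lt) hint,
    pos_iff_ne_zero]
  intro h
  have : ∀ᵐ _ ∂μ, False := ((measure_eq_zero_iff_ae_notMem.mp h).and hpos).mono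
    fun x hx => hx.1 (Function.mem_support.mpr hx.2.ne')
  exact NeZero.ne μ (ae_eq_bot.mp (eventually_false_iff_eq_bot.mp this))

end CauchyTransform

theorem chiL_eq_add_div_slope (μ : Measure ℝ) (w : ℂ) :
    chiL μ w = w + (exp (cauchy μ (conj w)) - 1) /
      slope (fun u => exp (cauchy μ u)) (conj w) w := by
  rw [chiL, slope_def_field, div_div_eq_mul_div, mul_comm]

theorem etaL_eq_one_add_div_slope (μ : Measure ℝ) (w : ℂ) :
    etaL μ w = 1 + (exp (cauchy μ w) - 1) * (exp (cauchy μ (conj w)) - 1) /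
      slope (fun u => exp (cauchy μ u)) (conj w) w := by
  rw [etaL, slope_def_field, div_div_eq_mul_div]
  ring

theorem ofReal_chiE (μ : Measure ℝ) (t : ℝ) :
    (chiE μ t : ℂ) = t + (exp (Creal μ t) - 1) / (exp (Creal μ t) * Cder μ t) := by
  rw [chiE]
  push_cast
  rfl

theorem ofReal_etaE (μ : Measure ℝ) (t : ℝ) :
    (etaE μ t : ℂ) =
      1 + (exp (Creal μ t) - 1) * (exp (Creal μ t) - 1) / (exp (Creal μ t) * Cder μ t) := by
  rw [etaE]
  push_cast
  ring

theorem chiL_etaL_tendsto_chiE_etaE_general (μ : Measure ℝ) [IsProbabilityMeasure μ]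
    (t : ℝ) (ht : t ∉ msupport μ) (w : ℕ → ℂ) (hw : ∀ n, 0 < (w n).im)
    (hlim : Filter.Tendsto w Filter.atTop (nhds (t : ℂ))) :
    Filter.Tendsto (fun n => chiL μ (w n)) Filter.atTop (nhds ((chiE μ t : ℝ) : ℂ)) ∧
    Filter.Tendsto (fun n => etaL μ (w n)) Filter.atTop (nhds ((etaE μ t : ℝ) : ℂ)) := by
  have hE : HasStrictDerivAt (fun u => exp (cauchy μ u)) (exp (Creal μ t) * Cder μ t) t := by
    simpa only [cauchy_ofReal] using (hasStrictDerivAt_cauchy ht).cexp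
  have hconj : Tendsto (fun n => conj (w n)) atTop (nhds (t : ℂ)) := by
    simpa [Function.comp_def] using (Complex.continuous_conj.tendsto _).comp hlim
  have hslope := hE.tendsto_slope hconj hlim
    (.of_forall fun n h => (hw n).ne' (Complex.conj_eq_iff_im.mp h))
  have hne : (exp (Creal μ t) * Cder μ t : ℂ) ≠ 0 :=
    mul_ne_zero (exp_ne_zero _) (ofReal_ne_zero.2 (Cder_neg ht).ne)
  have hEw := (hE.hasDerivAt.continuousAt.tendsto.comp hlim).sub_const 1
  have hEconj := (hE.hasDerivAt.continuousAt.tendsto.comp hconj).sub_const 1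
  simp only [Function.comp_def, cauchy_ofReal] at hEw hEconj
  simp only [chiL_eq_add_div_slope, etaL_eq_one_add_div_slope, ofReal_chiE, ofReal_etaE]
  exact ⟨hlim.add (hEconj.div hslope hne), tendsto_const_nhds.add ((hEw.mul hEconj).div hslope hne)⟩

/-- For `t ∉ supp(μ)` and any sequence `wₙ ∈ ℍ` with `wₙ → t`, one has
`χ_L(wₙ) → χ_E(t)` and `η_L(wₙ) → η_E(t)`. -/
theorem chiL_etaL_tendsto_chiE_etaE (μ : Measure ℝ) (a b : ℝ) [IsProbabilityMeasure μ]
    (hle : μ ≤ volume) (hsupp : msupport μ ⊆ Set.Icc a b)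
    (ha : a ∈ msupport μ) (hb : b ∈ msupport μ) (hab : 1 < b - a)
    (t : ℝ) (ht : t ∉ msupport μ) (w : ℕ → ℂ) (hw : ∀ n, 0 < (w n).im)
    (hlim : Filter.Tendsto w Filter.atTop (nhds (t : ℂ))) :
    Filter.Tendsto (fun n => chiL μ (w n)) Filter.atTop (nhds ((chiE μ t : ℝ) : ℂ)) ∧
    Filter.Tendsto (fun n => etaL μ (w n)) Filter.atTop (nhds ((etaE μ t : ℝ) : ℂ)) :=
  chiL_etaL_tendsto_chiE_etaE_general μ t ht w hw hlim
end
end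

section
/- Let (χ, η) ∈ ℝ² with a ≤ χ + η − 1 ≤ χ ≤ b and 0 ≤ η ≤ 1, and let t ∈ ℝ with t ∉ supp(μ) and t ∉ [χ + η − 1, χ]. If e^{C(t)}·(t − χ) = t − χ − η + 1 and C′(t) + 1/(t − χ) − 1/(t − χ − η + 1) = 0, then η < 1, C(t) ≠ 0, χ = χ_E(t), and η = η_E(t). -/
/-!
For `t` off the support, `(t - x)⁻²` is bounded and positive `μ`-a.e., so `C′(t) < 0`. Writing
`A = t - χ` and `B = t - χ - η + 1 = A - η + 1`, the two equations then force `A, B ≠ 0`,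
`e^{C(t)} = B / A` and `C′(t) = (η - 1) / (A B)`; the sign of `C′(t)` gives `η < 1`, and
`χ_E(t)`, `η_E(t)` evaluate to `χ`, `η` by direct computation.
-/

open MeasureTheory Complex Filter Set

noncomputable section

lemma ae_le_abs_sub_of_notMem_msupport {μ : Measure ℝ} {t : ℝ} (ht : t ∉ msupport μ) :
    ∃ r > 0, ∀ᵐ x ∂μ, r ≤ |t - x| := by
  simp only [msupport, Set.mem_ofPred_eq, not_forall, not_not] at ht
  obtain ⟨U, hU, hU0⟩ := ht
  obtain ⟨r, hr, hball⟩ := Metric.mem_nhds_iff.1 hU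
  refine ⟨r, hr, ?_⟩
  filter_upwards [measure_eq_zero_iff_ae_notMem.1 (measure_mono_null hball hU0)] with x hx
  simpa [Metric.mem_ball, Real.dist_eq, abs_sub_comm] using hx

lemma integral_inv_sq_sub_pos_of_notMem_msupport {μ : Measure ℝ} [IsFiniteMeasure μ] [NeZero μ]
    {t : ℝ} (ht : t ∉ msupport μ) : 0 < ∫ x, ((t - x) ^ 2)⁻¹ ∂μ := by
  obtain ⟨r, hr, hdist⟩ := ae_le_abs_sub_of_notMem_msupport ht
  have hbound : ∀ᵐ x ∂μ, ‖((t - x) ^ 2)⁻¹‖ ≤ (r ^ 2)⁻¹ := by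
    filter_upwards [hdist] with x hx
    rw [Real.norm_of_nonneg (by positivity), ← sq_abs]
    gcongr
  have hint : Integrable (fun x ↦ ((t - x) ^ 2)⁻¹) μ :=
    (integrable_const _).mono' (by fun_prop) hbound
  have hpos : ∀ᵐ x ∂μ, 0 < ((t - x) ^ 2)⁻¹ := by
    filter_upwards [hdist] with x hx
    have : t - x ≠ 0 := abs_pos.1 (hr.trans_le hx)
    positivity
  have hsupport : μ (Function.support fun x ↦ ((t - x) ^ 2)⁻¹)ᶜ = 0 :=
    ae_iff.1 (hpos.mono fun _ hx ↦ hx.ne')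
  rw [integral_pos_iff_support_of_nonneg_ae (hpos.mono fun _ hx ↦ hx.le) hint,
    measure_congr (ae_eq_univ.2 hsupport)]
  exact Measure.measure_univ_pos.2 (NeZero.ne μ)

lemma Cder_neg_of_notMem_msupport {μ : Measure ℝ} [IsFiniteMeasure μ] [NeZero μ] {t : ℝ}
    (ht : t ∉ msupport μ) : Cder μ t < 0 :=
  neg_neg_of_pos (integral_inv_sq_sub_pos_of_notMem_msupport ht)

lemma repeated_root_equations_solution {E C A η : ℝ} (hE : 0 < E) (hC : C < 0) (e1 : E * A = A - η + 1)
    (e2 : C + 1 / A - 1 / (A - η + 1) = 0) :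
    η < 1 ∧ E ≠ 1 ∧ (E - 1) / (E * C) = -A ∧ 1 + (E - 1) ^ 2 / (E * C) = η := by
  -- With `1 / 0 = 0`, `A = 0` would reduce `e2` to `C = 0`.
  have hA : A ≠ 0 := by
    rintro rfl
    rw [mul_zero] at e1
    rw [← e1] at e2
    simp only [div_zero, add_zero, sub_zero] at e2
    exact hC.ne e2
  have hB : A - η + 1 ≠ 0 := by rw [← e1]; positivity
  have hEA : E = (A - η + 1) / A := by field_simp; linarith
  have hCA : C = (η - 1) / (A * (A - η + 1)) := by
    field_simp at e2 ⊢
    linarith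
  have hη1 : η - 1 ≠ 0 := by
    intro h
    rw [h, zero_div] at hCA
    exact hC.ne hCA
  refine ⟨?_, ?_, ?_, ?_⟩
  · have hCEA : η - 1 = C * (E * A ^ 2) := by rw [hCA, hEA]; field_simp
    have hEA2 : 0 < E * A ^ 2 := by positivity
    nlinarith
  · rintro rfl
    exact hη1 (by linarith)
  all_goals
    rw [hEA, hCA]
    field_simp
    ring

theorem repeated_root_eq_chiE_etaE_general (μ : Measure ℝ) [IsProbabilityMeasure μ]
    (χ η t : ℝ)
    (ht : t ∉ msupport μ)
    (e1 : Real.exp (Creal μ t) * (t - χ) = t - χ - η + 1)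
    (e2 : Cder μ t + 1 / (t - χ) - 1 / (t - χ - η + 1) = 0) :
    η < 1 ∧ Creal μ t ≠ 0 ∧ χ = chiE μ t ∧ η = etaE μ t := by
  obtain ⟨hη, hexp, hχ, hηE⟩ :=
    repeated_root_equations_solution (Real.exp_pos _) (Cder_neg_of_notMem_msupport ht) e1 e2
  refine ⟨hη, fun h ↦ hexp (by rw [h, Real.exp_zero]), ?_, ?_⟩
  · rw [chiE, hχ]
    ring
  · rw [etaE, hηE]

/-- Converse: if `(χ, η)` satisfies the constraints, `t ∉ supp(μ)`, `t ∉ [χ+η-1, χ]`,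
and the repeated-root equations hold, then `η < 1`, `C(t) ≠ 0`, `χ = χ_E(t)`,
`η = η_E(t)`. -/
theorem repeated_root_eq_chiE_etaE (μ : Measure ℝ) (a b : ℝ) [IsProbabilityMeasure μ]
    (hle : μ ≤ volume) (hsupp : msupport μ ⊆ Set.Icc a b)
    (ha : a ∈ msupport μ) (hb : b ∈ msupport μ) (hab : 1 < b - a)
    (χ η t : ℝ)
    (h1 : a ≤ χ + η - 1) (h2 : χ + η - 1 ≤ χ) (h3 : χ ≤ b) (h4 : 0 ≤ η) (h5 : η ≤ 1)
    (ht : t ∉ msupport μ) (ht' : t ∉ Set.Icc (χ + η - 1) χ)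
    (e1 : Real.exp (Creal μ t) * (t - χ) = t - χ - η + 1)
    (e2 : Cder μ t + 1 / (t - χ) - 1 / (t - χ - η + 1) = 0) :
    η < 1 ∧ Creal μ t ≠ 0 ∧ χ = chiE μ t ∧ η = etaE μ t :=
  repeated_root_eq_chiE_etaE_general μ χ η t ht e1 e2
end
end

section
/- Let (χ, η) ∈ ℝ² with a ≤ χ + η − 1 ≤ χ ≤ b and 0 ≤ η < 1, and suppose χ ∉ S and χ + η − 1 ∉ S. Then g(χ) and g(χ + η − 1) are not both zero. -/
open MeasureTheory Complex Filter Set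

noncomputable section

/-- `S₁ = supp(μ restricted to [χ, b])`. -/
def S1 (μ : Measure ℝ) (b χ : ℝ) : Set ℝ := msupport (μ.restrict (Set.Icc χ b))

/-- `S₂ = supp((λ - μ) restricted to [χ + η - 1, χ])`. -/
def S2 (μ : Measure ℝ) (χ η : ℝ) : Set ℝ :=
  msupport ((volume - μ).restrict (Set.Icc (χ + η - 1) χ))

/-- `S₃ = supp(μ restricted to [a, χ + η - 1])`. -/
def S3 (μ : Measure ℝ) (a χ η : ℝ) : Set ℝ := msupport (μ.restrict (Set.Icc a (χ + η - 1)))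

/-- `g(w) = ∫_{[χ,b]} (w-x)⁻¹ dμ - ∫_{[χ+η-1,χ]} (w-x)⁻¹ d(λ-μ) + ∫_{[a,χ+η-1]} (w-x)⁻¹ dμ`. -/
def gfun (μ : Measure ℝ) (a b χ η : ℝ) (w : ℂ) : ℂ :=
  (∫ x in Set.Icc χ b, (w - (x : ℂ))⁻¹ ∂μ)
    - (∫ x in Set.Icc (χ + η - 1) χ, (w - (x : ℂ))⁻¹ ∂(volume - μ))
    + ∫ x in Set.Icc a (χ + η - 1), (w - (x : ℂ))⁻¹ ∂μ

/-!
With `c = χ + η - 1 < χ`, the difference `g(χ) - g(c)` is real and equals the integral of the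
kernel `(χ - x)⁻¹ - (c - x)⁻¹ = (c - χ) / ((χ - x)(c - x))` against
`μ|[χ,b] - (λ - μ)|[c,χ] + μ|[a,c]`; the hypotheses `χ, c ∉ S` make every piece integrable and
remove the endpoints where the kernel blows up. The kernel is negative off `[c, χ]` and positive
inside, so all three terms are `≤ 0`. Since `b - a > 1 ≥ χ - c`, either `a < c` or `χ < b`, and
since `a, b ∈ supp μ` the corresponding outer piece has positive mass, making `g(χ) - g(c) < 0`.
-/

theorem msupport_eq_support_s19 (ν : Measure ℝ) : msupport ν = ν.support := by
  ext x
  simp only [msupport, Measure.mem_support_iff_forall, pos_iff_ne_zero, mem_ofPred_eq]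

section Support

variable {X : Type*} [TopologicalSpace X] [MeasurableSpace X] {ν : Measure X}

lemma ae_ne_of_notMem_support {x : X} (hx : x ∉ ν.support) : ∀ᵐ y ∂ν, y ≠ x := by
  obtain ⟨U, hU, hνU⟩ := Measure.notMem_support_iff_exists.mp hx
  filter_upwards [compl_mem_ae_iff.mpr hνU] with y hy hyx
  exact hy (hyx ▸ mem_of_mem_nhds hU)

lemma notMem_support_restrict_of_notMem [OpensMeasurableSpace X] {s : Set X} (hs : IsClosed s)
    {x : X} (hx : x ∉ s) : x ∉ (ν.restrict s).support :=
  fun h => hx (hs.closure_eq ▸ (Measure.support_restrict_subset h).1)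

end Support

lemma measure_Icc_pos_of_mem_support_of_support_subset_Ici {μ : Measure ℝ} {a c : ℝ}
    (ha : a ∈ μ.support) (hsupp : μ.support ⊆ Ici a) (hac : a < c) : 0 < μ (Icc a c) :=
  calc 0 < μ (Ioo (a - 1) c) :=
        (Measure.mem_support_iff_forall a).mp ha _ (Ioo_mem_nhds (by linarith) hac)
    _ = μ (Ioo (a - 1) c ∩ μ.support) := (measure_inter_conull Measure.measure_compl_support).symm
    _ ≤ μ (Icc a c) := measure_mono fun x hx => ⟨hsupp hx.2, hx.1.2.le⟩

lemma measure_Icc_pos_of_mem_support_of_support_subset_Iic {μ : Measure ℝ} {b c : ℝ}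
    (hb : b ∈ μ.support) (hsupp : μ.support ⊆ Iic b) (hcb : c < b) : 0 < μ (Icc c b) :=
  calc 0 < μ (Ioo c (b + 1)) :=
        (Measure.mem_support_iff_forall b).mp hb _ (Ioo_mem_nhds hcb (by linarith))
    _ = μ (Ioo c (b + 1) ∩ μ.support) := (measure_inter_conull Measure.measure_compl_support).symm
    _ ≤ μ (Icc c b) := measure_mono fun x hx => ⟨hx.1.1.le, hsupp hx.2⟩

section Icc

variable {ν : Measure ℝ} {p q : ℝ}

lemma ae_restrict_Icc_mem_Ioc (hp : p ∉ (ν.restrict (Icc p q)).support) :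
    ∀ᵐ x ∂ν.restrict (Icc p q), x ∈ Ioc p q := by
  filter_upwards [ae_restrict_mem measurableSet_Icc, ae_ne_of_notMem_support hp] with x hx hxp
  exact ⟨hx.1.lt_of_ne' hxp, hx.2⟩

lemma ae_restrict_Icc_mem_Ico (hq : q ∉ (ν.restrict (Icc p q)).support) :
    ∀ᵐ x ∂ν.restrict (Icc p q), x ∈ Ico p q := by
  filter_upwards [ae_restrict_mem measurableSet_Icc, ae_ne_of_notMem_support hq] with x hx hxq
  exact ⟨hx.1, hx.2.lt_of_ne hxq⟩

end Icc

lemma integrableOn_inv_sub_of_notMem_support {ν : Measure ℝ} [IsLocallyFiniteMeasure ν]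
    {K : Set ℝ} (hK : IsCompact K) {w : ℝ} (hw : w ∉ (ν.restrict K).support) :
    IntegrableOn (fun x => (w - x)⁻¹) K ν := by
  obtain ⟨U, hU, hνU⟩ := Measure.notMem_support_iff_exists.mp hw
  obtain ⟨V, hVU, hV, hwV⟩ := mem_nhds_iff.mp hU
  have hKV : ν (K ∩ V) = 0 := by
    rw [inter_comm, ← Measure.restrict_apply hV.measurableSet]
    exact measure_mono_null hVU hνU
  have hcont : ContinuousOn (fun x : ℝ => (w - x)⁻¹) (K \ V) :=
    (continuous_const.sub continuous_id).continuousOn.inv₀ fun x hx =>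
      sub_ne_zero.mpr fun hxw : w = x => hx.2 (hxw ▸ hwV)
  exact ((hcont.integrableOn_compact (hK.diff hV)).union
    (IntegrableOn.of_measure_zero hKV)).mono_set (sdiff_union_inter K V).symm.subset

lemma integrableOn_inv_sub_of_notMem {ν : Measure ℝ} [IsLocallyFiniteMeasure ν]
    {K : Set ℝ} (hK : IsCompact K) {w : ℝ} (hw : w ∉ K) :
    IntegrableOn (fun x => (w - x)⁻¹) K ν :=
  integrableOn_inv_sub_of_notMem_support hK (notMem_support_restrict_of_notMem hK.isClosed hw)

lemma integral_neg_of_ae_neg {α : Type*} [MeasurableSpace α] {ν : Measure α} {f : α → ℝ}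
    (hf : Integrable f ν) (hneg : ∀ᵐ x ∂ν, f x < 0) (hν : ν ≠ 0) : ∫ x, f x ∂ν < 0 := by
  have hsupp : Function.support (-f) =ᵐ[ν] univ :=
    eventuallyEq_univ.mpr (hneg.mono fun x hx => neg_ne_zero.mpr hx.ne)
  have hpos : 0 < ∫ x, (-f) x ∂ν := by
    rw [integral_pos_iff_support_of_nonneg_ae (hneg.mono fun x hx => by simp [hx.le]) hf.neg,
      measure_congr hsupp]
    exact Measure.measure_univ_pos.mpr hν
  simpa [integral_neg] using hpos

section Kernel

variable {c y x : ℝ}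

lemma inv_sub_sub_inv_sub_neg (hcy : c < y) (hx : x < c ∨ y < x) :
    (y - x)⁻¹ - (c - x)⁻¹ < 0 := by
  rcases hx with hx | hx
  · rw [inv_sub_inv (by linarith) (by linarith)]
    exact div_neg_of_neg_of_pos (by linarith) (mul_pos (by linarith) (by linarith))
  · rw [inv_sub_inv (by linarith) (by linarith)]
    exact div_neg_of_neg_of_pos (by linarith) (mul_pos_of_neg_of_neg (by linarith) (by linarith))

lemma inv_sub_sub_inv_sub_pos (hcx : c < x) (hxy : x < y) : 0 < (y - x)⁻¹ - (c - x)⁻¹ := by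
  rw [inv_sub_inv (by linarith) (by linarith)]
  exact div_pos_of_neg_of_neg (by linarith) (mul_neg_of_pos_of_neg (by linarith) (by linarith))

end Kernel

def gfunReal (μ : Measure ℝ) (a b χ η w : ℝ) : ℝ :=
  (∫ x in Icc χ b, (w - x)⁻¹ ∂μ) - (∫ x in Icc (χ + η - 1) χ, (w - x)⁻¹ ∂(volume - μ))
    + ∫ x in Icc a (χ + η - 1), (w - x)⁻¹ ∂μ

lemma gfun_ofReal (μ : Measure ℝ) (a b χ η w : ℝ) :
    gfun μ a b χ η (w : ℂ) = gfunReal μ a b χ η w := by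
  simp only [gfun, gfunReal, ← ofReal_sub, ← ofReal_inv, integral_complex_ofReal, ofReal_add]

section Sign

variable {μ : Measure ℝ} [IsFiniteMeasure μ] {a b χ η : ℝ}

lemma gfunReal_sub_gfunReal (hη : η < 1)
    (hχ₁ : χ ∉ (μ.restrict (Icc χ b)).support)
    (hχ₂ : χ ∉ ((volume - μ).restrict (Icc (χ + η - 1) χ)).support)
    (hc₂ : χ + η - 1 ∉ ((volume - μ).restrict (Icc (χ + η - 1) χ)).support)
    (hc₃ : χ + η - 1 ∉ (μ.restrict (Icc a (χ + η - 1))).support) :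
    gfunReal μ a b χ η χ - gfunReal μ a b χ η (χ + η - 1) =
      (∫ x in Icc χ b, ((χ - x)⁻¹ - (χ + η - 1 - x)⁻¹) ∂μ)
        - (∫ x in Icc (χ + η - 1) χ, ((χ - x)⁻¹ - (χ + η - 1 - x)⁻¹) ∂(volume - μ))
        + ∫ x in Icc a (χ + η - 1), ((χ - x)⁻¹ - (χ + η - 1 - x)⁻¹) ∂μ := by
  have : IsLocallyFiniteMeasure (volume - μ) := Measure.isLocallyFiniteMeasure_of_le Measure.sub_le
  rw [integral_sub (integrableOn_inv_sub_of_notMem_support isCompact_Icc hχ₁)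
      (integrableOn_inv_sub_of_notMem isCompact_Icc fun h => by linarith [h.1]),
    integral_sub (integrableOn_inv_sub_of_notMem_support isCompact_Icc hχ₂)
      (integrableOn_inv_sub_of_notMem_support isCompact_Icc hc₂),
    integral_sub (integrableOn_inv_sub_of_notMem isCompact_Icc fun h => by linarith [h.2])
      (integrableOn_inv_sub_of_notMem_support isCompact_Icc hc₃), gfunReal, gfunReal]
  ring

lemma gfunReal_lt_gfunReal (hsupp : μ.support ⊆ Icc a b) (ha : a ∈ μ.support)
    (hb : b ∈ μ.support) (hab : 1 < b - a) (hη₀ : 0 ≤ η) (hη₁ : η < 1)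
    (hχ₁ : χ ∉ (μ.restrict (Icc χ b)).support)
    (hχ₂ : χ ∉ ((volume - μ).restrict (Icc (χ + η - 1) χ)).support)
    (hc₂ : χ + η - 1 ∉ ((volume - μ).restrict (Icc (χ + η - 1) χ)).support)
    (hc₃ : χ + η - 1 ∉ (μ.restrict (Icc a (χ + η - 1))).support) :
    gfunReal μ a b χ η χ < gfunReal μ a b χ η (χ + η - 1) := by
  rw [← sub_neg, gfunReal_sub_gfunReal hη₁ hχ₁ hχ₂ hc₂ hc₃]
  set c := χ + η - 1
  have hcχ : c < χ := by linarith
  have neg₁ : ∀ᵐ x ∂μ.restrict (Icc χ b), (χ - x)⁻¹ - (c - x)⁻¹ < 0 :=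
    (ae_restrict_Icc_mem_Ioc hχ₁).mono fun x hx => inv_sub_sub_inv_sub_neg hcχ (Or.inr hx.1)
  have neg₃ : ∀ᵐ x ∂μ.restrict (Icc a c), (χ - x)⁻¹ - (c - x)⁻¹ < 0 :=
    (ae_restrict_Icc_mem_Ico hc₃).mono fun x hx => inv_sub_sub_inv_sub_neg hcχ (Or.inl hx.2)
  have pos₂ : ∀ᵐ x ∂(volume - μ).restrict (Icc c χ), 0 ≤ (χ - x)⁻¹ - (c - x)⁻¹ := by
    filter_upwards [ae_restrict_Icc_mem_Ioc hc₂, ae_restrict_Icc_mem_Ico hχ₂] with x hc hχ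
    exact (inv_sub_sub_inv_sub_pos hc.1 hχ.2).le
  have hI₁ := integral_nonpos_of_ae (neg₁.mono fun _ hx => hx.le)
  have hI₂ := integral_nonneg_of_ae pos₂
  have hI₃ := integral_nonpos_of_ae (neg₃.mono fun _ hx => hx.le)
  rcases (show a < c ∨ χ < b by by_contra!; linarith) with hac | hχb
  · have int₃ : IntegrableOn (fun x => (χ - x)⁻¹ - (c - x)⁻¹) (Icc a c) μ :=
      (integrableOn_inv_sub_of_notMem isCompact_Icc fun h => hcχ.not_ge h.2).sub
        (integrableOn_inv_sub_of_notMem_support isCompact_Icc hc₃)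
    have := integral_neg_of_ae_neg int₃ neg₃ <| Measure.restrict_eq_zero.not.mpr
      (measure_Icc_pos_of_mem_support_of_support_subset_Ici ha
        (hsupp.trans Icc_subset_Ici_self) hac).ne'
    linarith
  · have int₁ : IntegrableOn (fun x => (χ - x)⁻¹ - (c - x)⁻¹) (Icc χ b) μ :=
      (integrableOn_inv_sub_of_notMem_support isCompact_Icc hχ₁).sub
        (integrableOn_inv_sub_of_notMem isCompact_Icc fun h => hcχ.not_ge h.1)
    have := integral_neg_of_ae_neg int₁ neg₁ <| Measure.restrict_eq_zero.not.mpr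
      (measure_Icc_pos_of_mem_support_of_support_subset_Iic hb
        (hsupp.trans Icc_subset_Iic_self) hχb).ne'
    linarith

end Sign

theorem gfun_not_both_zero_general (μ : Measure ℝ) (a b : ℝ) [IsProbabilityMeasure μ]
    (hsupp : msupport μ ⊆ Set.Icc a b)
    (ha : a ∈ msupport μ) (hb : b ∈ msupport μ) (hab : 1 < b - a)
    (χ η : ℝ)
    (h4 : 0 ≤ η) (h5 : η < 1)
    (hχ : χ ∉ S1 μ b χ ∪ S2 μ χ η ∪ S3 μ a χ η)
    (hχη : χ + η - 1 ∉ S1 μ b χ ∪ S2 μ χ η ∪ S3 μ a χ η) :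
    gfun μ a b χ η (χ : ℂ) ≠ 0 ∨ gfun μ a b χ η ((χ + η - 1 : ℝ) : ℂ) ≠ 0 := by
  simp only [S1, S2, S3, msupport_eq_support_s19, mem_union, not_or] at hsupp ha hb hχ hχη
  obtain ⟨⟨hχ₁, hχ₂⟩, -⟩ := hχ
  obtain ⟨⟨-, hc₂⟩, hc₃⟩ := hχη
  rw [gfun_ofReal, gfun_ofReal, Ne, Ne, ofReal_eq_zero, ofReal_eq_zero, ← not_and_or]
  rintro ⟨hgχ, hgc⟩
  have := gfunReal_lt_gfunReal hsupp ha hb hab h4 h5 hχ₁ hχ₂ hc₂ hc₃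
  linarith

/-- If `0 ≤ η < 1`, `χ ∉ S` and `χ + η - 1 ∉ S`, then `g(χ)` and `g(χ + η - 1)` are not
both zero. -/
theorem gfun_not_both_zero (μ : Measure ℝ) (a b : ℝ) [IsProbabilityMeasure μ]
    (hle : μ ≤ volume) (hsupp : msupport μ ⊆ Set.Icc a b)
    (ha : a ∈ msupport μ) (hb : b ∈ msupport μ) (hab : 1 < b - a)
    (χ η : ℝ) (h1 : a ≤ χ + η - 1) (h2 : χ + η - 1 ≤ χ) (h3 : χ ≤ b)
    (h4 : 0 ≤ η) (h5 : η < 1)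
    (hχ : χ ∉ S1 μ b χ ∪ S2 μ χ η ∪ S3 μ a χ η)
    (hχη : χ + η - 1 ∉ S1 μ b χ ∪ S2 μ χ η ∪ S3 μ a χ η) :
    gfun μ a b χ η (χ : ℂ) ≠ 0 ∨ gfun μ a b χ η ((χ + η - 1 : ℝ) : ℂ) ≠ 0 :=
  gfun_not_both_zero_general μ a b hsupp ha hb hab χ η h4 h5 hχ hχη
end
end
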